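/- The fourth central moment μ_{η,4}(x) := R_{η}^{(α,β)}((t−x)⁴;x) satisfies η²·μ_{η,4}(x) → 3x²(9β²+6β+1)/β² = 3x²(3β+1)²/β² as η → ∞, for every fixed x ≥ 0. -/

import Mathlib

/-!
Each kernel term is a Gamma moment: for `κ ≠ 0`, `∫ I_κ(z) (z - x)^n dz = P_n(κ)` for an explicit
polynomial `P_n` of degree `n`, and `P_n(0) = (-x)^n` is exactly the `κ = 0` term of `R_η`.
With `y = ηx/2`, the Laguerre weights have the binomial moments
`∑_κ 2^{-κ} L_κ^{(α)}(-y) C(κ, j) = 2^{α+1} e^y L_j^{(α)}(-2y)`: writing `L_κ^{(α)}(-y)` as a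
convolution turns the weight into a Poisson weight in `ι` times a negative-binomial weight in
`m = κ - ι`, Vandermonde splits `C(ι + m, j)`, and both series are summed in closed form.
Newton's forward-difference expansion of `P_4` then gives `μ_{η,4}(x)` explicitly as
`C₀/η² + C₁/η³ + C₂/η⁴`, with `C₀ = 3x²(3β+1)²/β²`.
-/

open Real MeasureTheory Filter Set

/-- Generalized Laguerre polynomial `L_κ^{(α)}(x)`. -/
noncomputable def lag (κ : ℕ) (α x : ℝ) : ℝ :=
  ∑ ι ∈ Finset.range (κ + 1),
    (-1 : ℝ) ^ ι / (Nat.factorial ι) *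
      ((∏ s ∈ Finset.range (κ - ι), (α + ι + 1 + s)) / (Nat.factorial (κ - ι))) * x ^ ι
/-- Gamma-type kernel `I_{κ,η}^β(z)`. -/
noncomputable def ker (η β : ℝ) (κ : ℕ) (z : ℝ) : ℝ :=
  η * β * Real.exp (-(η * β * z)) * (η * β * z) ^ ((κ : ℝ) * β - 1) / Real.Gamma ((κ : ℝ) * β)
/-- The operators `R_η^{(α,β)}(Φ; x)`, with the `κ = 0` term interpreted as `Φ(0)·(coefficient)`. -/
noncomputable def Rop (η β α : ℝ) (Φ : ℝ → ℝ) (x : ℝ) : ℝ :=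
  Real.exp (-(η * x) / 2) * (2 : ℝ) ^ (-α - 1) *
    ∑' κ : ℕ, (2 : ℝ) ^ (-(κ : ℝ)) * lag κ α (-(η * x) / 2) *
      (if κ = 0 then Φ 0 else ∫ z in Set.Ioi (0 : ℝ), ker η β κ z * Φ z)

open Finset Polynomial

theorem ascPochhammer_eval_eq_prod_range {R : Type*} [CommSemiring R] (n : ℕ) (r : R) :
    (ascPochhammer R n).eval r = ∏ s ∈ range n, (r + s) := by
  induction n with
  | zero => simp
  | succ n ih => rw [ascPochhammer_succ_eval, ih, prod_range_succ]

theorem ascPochhammer_add_eval {R : Type*} [CommSemiring R] (a : R) (k n : ℕ) :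
    (ascPochhammer R (k + n)).eval a =
      (ascPochhammer R k).eval a * (ascPochhammer R n).eval (a + k) := by
  rw [← ascPochhammer_mul, eval_mul, eval_comp, eval_add, eval_X, eval_natCast]

theorem Ring.choose_add_sub_one_eq_ascPochhammer_div {K : Type*} [Field K] [CharZero K]
    (a : K) (m : ℕ) : Ring.choose (a + m - 1) m = (ascPochhammer K m).eval a / m.factorial := by
  rw [← Ring.multichoose_eq, eq_div_iff (Nat.cast_ne_zero.mpr m.factorial_ne_zero), mul_comm,
    ← nsmul_eq_mul, Ring.factorial_nsmul_multichoose_eq_ascPochhammer,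
    ascPochhammer_smeval_eq_eval]

theorem Polynomial.eval_natCast_eq_sum_choose_mul_fwdDiff_iter {R : Type*} [CommRing R]
    {P : R[X]} {d : ℕ} (hP : P.natDegree < d) (n : ℕ) :
    P.eval (n : R) = ∑ j ∈ range d, (n.choose j : R) * (fwdDiff 1)^[j] P.eval 0 := by
  have h := shift_eq_sum_fwdDiff_iter (1 : R) P.eval n 0
  simp only [nsmul_eq_mul, mul_one, zero_add] at h
  rw [h, sum_subset (range_subset_range.mpr (Nat.le_add_right (n + 1) d)) fun j _ hj => by
      rw [Nat.choose_eq_zero_of_lt (by simpa using hj), Nat.cast_zero, zero_mul],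
    ← sum_subset (range_subset_range.mpr (Nat.le_add_left d (n + 1))) fun j _ hj => by
      rw [fwdDiff_iter_eq_zero_of_degree_lt (hP.trans_le (by simpa using hj)), Pi.zero_apply,
        mul_zero]]

theorem hasSum_sum_antidiagonal_of_nonneg {f : ℕ × ℕ → ℝ} (hf : 0 ≤ f) {g : ℕ → ℝ} {s : ℝ}
    (hfib : ∀ i, HasSum (fun j => f (i, j)) (g i)) (hg : HasSum g s) :
    HasSum (fun n => ∑ p ∈ antidiagonal n, f p) s := by
  have hsum : Summable f := (summable_prod_of_nonneg hf).mpr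
    ⟨fun i => (hfib i).summable, hg.summable.congr fun i => ((hfib i).tsum_eq).symm⟩
  have hf : HasSum f s := (hsum.hasSum.prod_fiberwise hfib).unique hg ▸ hsum.hasSum
  refine ((Equiv.hasSum_iff HasAntidiagonal.sigmaAntidiagonalEquivProd).mpr hf).sigma fun n => ?_
  rw [← sum_finset_coe]
  exact hasSum_fintype _

theorem hasSum_pow_div_factorial_mul_choose (y : ℝ) (k : ℕ) :
    HasSum (fun n : ℕ => y ^ n / n.factorial * n.choose k) (y ^ k / k.factorial * exp y) := by
  rw [← hasSum_nat_add_iff' k, sum_eq_zero fun n hn => by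
    rw [Nat.choose_eq_zero_of_lt (mem_range.mp hn), Nat.cast_zero, mul_zero], sub_zero]
  have h := (NormedSpace.expSeries_div_hasSum_exp y).mul_left (y ^ k / k.factorial)
  rw [← Real.exp_eq_exp_ℝ] at h
  refine h.congr_fun fun n => ?_
  have h : ((n + k).choose k * n.factorial * k.factorial : ℝ) = (n + k).factorial := by
    exact_mod_cast Nat.add_choose_mul_factorial_mul_factorial n k
  field_simp
  rw [← h, pow_add]
  ring

theorem hasSum_ascPochhammer_div_factorial_mul_pow (a : ℝ) {t : ℝ} (ht : |t| < 1) :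
    HasSum (fun m : ℕ => (ascPochhammer ℝ m).eval a / m.factorial * t ^ m) ((1 - t) ^ (-a)) := by
  have h := (Real.one_div_one_sub_rpow_hasFPowerSeriesOnBall_zero a).hasSum
    (y := t) (by simpa [edist_dist, Real.dist_eq] using ht)
  simp only [FormalMultilinearSeries.ofScalars_apply_eq, smul_eq_mul, zero_add,
    Ring.choose_add_sub_one_eq_ascPochhammer_div] at h
  rwa [Real.rpow_neg (by linarith [(abs_lt.mp ht).2]), ← one_div]

theorem hasSum_ascPochhammer_div_factorial_mul_pow_mul_choose (a : ℝ) {t : ℝ} (ht : |t| < 1)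
    (k : ℕ) :
    HasSum (fun m : ℕ => (ascPochhammer ℝ m).eval a / m.factorial * t ^ m * m.choose k)
      ((ascPochhammer ℝ k).eval a / k.factorial * t ^ k * (1 - t) ^ (-(a + k))) := by
  rw [← hasSum_nat_add_iff' k, sum_eq_zero fun n hn => by
    rw [Nat.choose_eq_zero_of_lt (mem_range.mp hn), Nat.cast_zero, mul_zero], sub_zero]
  refine ((hasSum_ascPochhammer_div_factorial_mul_pow (a + k) ht).mul_left
    ((ascPochhammer ℝ k).eval a / k.factorial * t ^ k)).congr_fun fun n => ?_
  have h : ((n + k).choose k * n.factorial * k.factorial : ℝ) = (n + k).factorial := by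
    exact_mod_cast Nat.add_choose_mul_factorial_mul_factorial n k
  rw [add_comm n k, ascPochhammer_add_eval] at *
  field_simp
  rw [← h, pow_add]
  ring

theorem hasSum_ascPochhammer_div_factorial_mul_half_pow_mul_choose_add (a : ℝ) (ι j : ℕ) :
    HasSum (fun m : ℕ => (ascPochhammer ℝ m).eval a / m.factorial * (1 / 2) ^ m *
        (ι + m).choose j)
      (2 ^ a * ∑ q ∈ antidiagonal j,
        (ι.choose q.1 : ℝ) * ((ascPochhammer ℝ q.2).eval a / q.2.factorial)) := by
  have ht : |(1 / 2 : ℝ)| < 1 := by norm_num [abs_of_pos]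
  have h := hasSum_sum fun (q : ℕ × ℕ) (_ : q ∈ antidiagonal j) =>
    (hasSum_ascPochhammer_div_factorial_mul_pow_mul_choose a ht q.2).mul_left (ι.choose q.1 : ℝ)
  have h2 (k : ℕ) : (1 / 2 : ℝ) ^ k * (1 - 1 / 2) ^ (-(a + k)) = 2 ^ a := by
    rw [show (1 : ℝ) - 1 / 2 = 2⁻¹ by norm_num, Real.inv_rpow zero_le_two,
      Real.rpow_neg zero_le_two, inv_inv, Real.rpow_add two_pos, Real.rpow_natCast,
      mul_left_comm, ← mul_pow]
    norm_num
  simp only [mul_assoc, h2] at h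
  rw [sum_congr rfl fun q _ => show _ = 2 ^ a * ((ι.choose q.1 : ℝ) *
    ((ascPochhammer ℝ q.2).eval a / q.2.factorial)) by ring, ← mul_sum] at h
  refine h.congr_fun fun m => ?_
  rw [Nat.add_choose_eq, Nat.cast_sum, mul_sum]
  refine sum_congr rfl fun q _ => ?_
  push_cast
  ring

theorem lag_neg_eq_sum_antidiagonal (κ : ℕ) (α y : ℝ) :
    lag κ α (-y) = ∑ p ∈ antidiagonal κ,
      y ^ p.1 / p.1.factorial * ((ascPochhammer ℝ p.2).eval (α + p.1 + 1) / p.2.factorial) := by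
  rw [lag, Nat.sum_antidiagonal_eq_sum_range_succ_mk]
  refine sum_congr rfl fun ι _ => ?_
  have h : ((-1 : ℝ) ^ ι) * (-1) ^ ι = 1 := by rw [← mul_pow]; norm_num
  rw [ascPochhammer_eval_eq_prod_range, neg_pow y]
  linear_combination (y ^ ι / ι.factorial *
    ((∏ s ∈ range (κ - ι), (α + ι + 1 + s)) / (κ - ι).factorial)) * h

/-- Both sides are the coefficient of `s ^ j` in `(1 + s) ^ ι (1 - s) ^ (-(α + ι + 1))`, once
as written and once as `(1 - s) ^ (-(α + 1)) (1 + 2s / (1 - s)) ^ ι`. -/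
theorem sum_antidiagonal_choose_mul_ascPochhammer {j : ℕ} (hj : j ≤ 4) (α : ℝ) (ι : ℕ) :
    ∑ p ∈ antidiagonal j,
        (ι.choose p.1 : ℝ) * ((ascPochhammer ℝ p.2).eval (α + ι + 1) / p.2.factorial) =
      ∑ p ∈ antidiagonal j, 2 ^ p.1 * (ι.choose p.1 : ℝ) *
        ((ascPochhammer ℝ p.2).eval (α + p.1 + 1) / p.2.factorial) := by
  simp only [Nat.sum_antidiagonal_eq_sum_range_succ_mk, Nat.cast_choose_eq_descPochhammer_div]
  interval_cases j <;>
    simp [sum_range_succ, descPochhammer_succ_eval, ascPochhammer_succ_eval, Nat.factorial] <;>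
    ring

theorem hasSum_pow_div_factorial_mul_sum_choose_mul_ascPochhammer {j : ℕ} (hj : j ≤ 4)
    (α y : ℝ) :
    HasSum (fun ι : ℕ => y ^ ι / ι.factorial * ∑ q ∈ antidiagonal j,
        (ι.choose q.1 : ℝ) * ((ascPochhammer ℝ q.2).eval (α + ι + 1) / q.2.factorial))
      (exp y * lag j α (-(2 * y))) := by
  have h := hasSum_sum fun (q : ℕ × ℕ) (_ : q ∈ antidiagonal j) =>
    (hasSum_pow_div_factorial_mul_choose y q.1).mul_left
      (2 ^ q.1 * ((ascPochhammer ℝ q.2).eval (α + q.1 + 1) / q.2.factorial))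
  have hv : ∑ q ∈ antidiagonal j, 2 ^ q.1 * ((ascPochhammer ℝ q.2).eval (α + q.1 + 1) /
      q.2.factorial) * (y ^ q.1 / q.1.factorial * exp y) = exp y * lag j α (-(2 * y)) := by
    rw [lag_neg_eq_sum_antidiagonal, mul_sum]
    exact sum_congr rfl fun q _ => by rw [mul_pow]; ring
  rw [hv] at h
  refine h.congr_fun fun ι => ?_
  rw [sum_antidiagonal_choose_mul_ascPochhammer hj, mul_sum]
  exact sum_congr rfl fun q _ => by ring

theorem hasSum_half_pow_mul_lag_mul_choose {α y : ℝ} (hα : -1 < α) (hy : 0 ≤ y) {j : ℕ}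
    (hj : j ≤ 4) :
    HasSum (fun κ : ℕ => (1 / 2) ^ κ * lag κ α (-y) * κ.choose j)
      (2 ^ (α + 1) * exp y * lag j α (-(2 * y))) := by
  set A : ℕ → ℕ → ℝ := fun ι m => (ascPochhammer ℝ m).eval (α + ι + 1) / m.factorial
  set f : ℕ × ℕ → ℝ := fun p =>
    y ^ p.1 / p.1.factorial * (1 / 2) ^ p.1 * (A p.1 p.2 * (1 / 2) ^ p.2 * (p.1 + p.2).choose j)
  have hf : 0 ≤ f := fun p => by
    have := ascPochhammer_pos p.2 _ (by linarith [Nat.cast_nonneg (α := ℝ) p.1] :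
      0 < α + p.1 + 1)
    positivity
  have hfib (ι : ℕ) : HasSum (fun m => f (ι, m)) (2 ^ (α + 1) *
      (y ^ ι / ι.factorial * ∑ q ∈ antidiagonal j, (ι.choose q.1 : ℝ) * A ι q.2)) := by
    have h := (hasSum_ascPochhammer_div_factorial_mul_half_pow_mul_choose_add
      (α + ι + 1) ι j).mul_left (y ^ ι / ι.factorial * (1 / 2) ^ ι)
    have h2 : (1 / 2 : ℝ) ^ ι * 2 ^ (α + ι + 1) = 2 ^ (α + 1) := by
      rw [add_right_comm, Real.rpow_add two_pos, Real.rpow_natCast, mul_left_comm, ← mul_pow]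
      norm_num
    have hv : y ^ ι / ι.factorial * (1 / 2) ^ ι * (2 ^ (α + ι + 1) *
        ∑ q ∈ antidiagonal j, (ι.choose q.1 : ℝ) * A ι q.2) = 2 ^ (α + 1) *
        (y ^ ι / ι.factorial * ∑ q ∈ antidiagonal j, (ι.choose q.1 : ℝ) * A ι q.2) := by
      rw [← h2]; ring
    exact hv ▸ h
  have hg := (hasSum_pow_div_factorial_mul_sum_choose_mul_ascPochhammer hj α y).mul_left
    (2 ^ (α + 1))
  rw [← mul_assoc] at hg
  refine (hasSum_sum_antidiagonal_of_nonneg hf hfib hg).congr_fun fun κ => ?_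
  rw [lag_neg_eq_sum_antidiagonal, mul_sum, sum_mul]
  refine sum_congr rfl fun ⟨ι, m⟩ hp => ?_
  rw [HasAntidiagonal.mem_antidiagonal] at hp
  subst hp
  simp only [f, A, pow_add]
  ring

theorem hasSum_half_pow_mul_lag_mul_eval {α y : ℝ} (hα : -1 < α) (hy : 0 ≤ y) {P : ℝ[X]}
    (hP : P.natDegree < 5) :
    HasSum (fun κ : ℕ => (1 / 2) ^ κ * lag κ α (-y) * P.eval (κ : ℝ))
      (2 ^ (α + 1) * exp y * ∑ j ∈ range 5, (fwdDiff 1)^[j] P.eval 0 * lag j α (-(2 * y))) := by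
  have h := hasSum_sum fun j (hj : j ∈ range 5) =>
    (hasSum_half_pow_mul_lag_mul_choose hα hy (Nat.lt_succ_iff.mp (mem_range.mp hj))).mul_right
      ((fwdDiff 1)^[j] P.eval 0)
  rw [sum_congr rfl fun j _ => show _ = 2 ^ (α + 1) * exp y *
    ((fwdDiff 1)^[j] P.eval 0 * lag j α (-(2 * y))) by ring, ← mul_sum] at h
  refine h.congr_fun fun κ => ?_
  rw [P.eval_natCast_eq_sum_choose_mul_fwdDiff_iter hP κ, mul_sum]
  exact sum_congr rfl fun j _ => by ring

theorem Real.Gamma_add_nat_eq_ascPochhammer_mul {s : ℝ} (hs : 0 < s) (m : ℕ) :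
    Gamma (s + m) = (ascPochhammer ℝ m).eval s * Gamma s := by
  induction m with
  | zero => simp
  | succ m ih =>
    rw [Nat.cast_succ, ← add_assoc, Real.Gamma_add_one (by positivity), ih,
      ascPochhammer_succ_eval]
    ring

theorem ker_mul_pow_eq {η β z : ℝ} (hη : 0 < η) (hβ : 0 < β) (hz : 0 < z) (κ m : ℕ) :
    ker η β κ z * z ^ m = (η * β) ^ ((κ : ℝ) * β) / Gamma (κ * β) *
      (z ^ ((κ : ℝ) * β + m - 1) * exp (-(η * β * z))) := by
  have hc : 0 < η * β := mul_pos hη hβ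
  rw [_root_.ker, Real.mul_rpow hc.le hz.le, add_sub_right_comm, Real.rpow_add hz,
    Real.rpow_natCast, Real.rpow_sub_one hc.ne']
  field_simp

theorem integrableOn_ker_mul_pow {η β : ℝ} (hη : 0 < η) (hβ : 0 < β) {κ : ℕ} (hκ : κ ≠ 0)
    (m : ℕ) : IntegrableOn (fun z => ker η β κ z * z ^ m) (Ioi 0) := by
  have hs : 0 < (κ : ℝ) * β := mul_pos (Nat.cast_pos.mpr (Nat.pos_of_ne_zero hκ)) hβ
  have h := (integrableOn_rpow_mul_exp_neg_mul_rpow (s := (κ : ℝ) * β + m - 1) (p := 1)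
    (by linarith [Nat.cast_nonneg (α := ℝ) m]) one_pos (mul_pos hη hβ)).const_mul
    ((η * β) ^ ((κ : ℝ) * β) / Gamma (κ * β))
  refine IntegrableOn.congr_fun h (fun z hz => ?_) measurableSet_Ioi
  rw [ker_mul_pow_eq hη hβ hz, Real.rpow_one, neg_mul]

theorem integral_ker_mul_pow {η β : ℝ} (hη : 0 < η) (hβ : 0 < β) {κ : ℕ} (hκ : κ ≠ 0)
    (m : ℕ) : ∫ z in Ioi 0, ker η β κ z * z ^ m =
      (ascPochhammer ℝ m).eval ((κ : ℝ) * β) / (η * β) ^ m := by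
  have hc : 0 < η * β := mul_pos hη hβ
  have hs : 0 < (κ : ℝ) * β := mul_pos (Nat.cast_pos.mpr (Nat.pos_of_ne_zero hκ)) hβ
  rw [setIntegral_congr_fun measurableSet_Ioi fun z hz => ker_mul_pow_eq hη hβ hz κ m,
    integral_const_mul, integral_rpow_mul_exp_neg_mul_Ioi (by positivity) hc,
    Real.Gamma_add_nat_eq_ascPochhammer_mul hs, one_div, Real.inv_rpow hc.le,
    Real.rpow_add hc, Real.rpow_natCast]
  have := (Real.Gamma_pos_of_pos hs).ne'
  have := (Real.rpow_pos_of_pos hc ((κ : ℝ) * β)).ne'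
  field_simp

/-- At `t = κ`, the `n`-th moment about `x` of the Gamma law with shape `κβ` and scale `c`. -/
noncomputable def gammaCentralMomentPoly (c β x : ℝ) (n : ℕ) : ℝ[X] :=
  ∑ m ∈ range (n + 1),
    C ((n.choose m : ℝ) * (-x) ^ (n - m) * c ^ m) * (ascPochhammer ℝ m).comp (C β * X)

theorem gammaCentralMomentPoly_eval (c β x : ℝ) (n : ℕ) (t : ℝ) :
    (gammaCentralMomentPoly c β x n).eval t =
      ∑ m ∈ range (n + 1), (n.choose m : ℝ) * (-x) ^ (n - m) * c ^ m *
        (ascPochhammer ℝ m).eval (t * β) := by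
  simp only [gammaCentralMomentPoly, eval_finsetSum, eval_mul, eval_C, eval_comp, eval_X,
    mul_comm β]

theorem natDegree_gammaCentralMomentPoly_le (c β x : ℝ) (n : ℕ) :
    (gammaCentralMomentPoly c β x n).natDegree ≤ n := by
  refine natDegree_sum_le_of_forall_le _ _ fun m hm => (natDegree_C_mul_le _ _).trans ?_
  refine natDegree_comp_le.trans ?_
  rw [ascPochhammer_natDegree]
  calc m * (C β * X).natDegree ≤ m * 1 :=
        Nat.mul_le_mul_left _ ((natDegree_C_mul_le _ _).trans natDegree_X_le)
    _ ≤ n := by simpa using Nat.lt_succ_iff.mp (mem_range.mp hm)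

theorem gammaCentralMomentPoly_eval_zero (c β x : ℝ) (n : ℕ) :
    (gammaCentralMomentPoly c β x n).eval 0 = (-x) ^ n := by
  rw [gammaCentralMomentPoly_eval, sum_eq_single_of_mem 0 (by simp) fun m _ hm => by
    rw [zero_mul, ascPochhammer_ne_zero_eval_zero _ hm, mul_zero]]
  simp

theorem integral_ker_mul_sub_pow {η β : ℝ} (hη : 0 < η) (hβ : 0 < β) {κ : ℕ} (hκ : κ ≠ 0)
    (x : ℝ) (n : ℕ) : ∫ z in Ioi 0, ker η β κ z * (z - x) ^ n =
      (gammaCentralMomentPoly (η * β)⁻¹ β x n).eval (κ : ℝ) := by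
  have hterm (m : ℕ) (z : ℝ) : ker η β κ z * (z ^ m * (-x) ^ (n - m) * (n.choose m)) =
      ((n.choose m : ℝ) * (-x) ^ (n - m)) * (ker η β κ z * z ^ m) := by ring
  simp_rw [sub_eq_add_neg, add_pow, mul_sum, hterm]
  rw [integral_finsetSum _ fun m _ => (integrableOn_ker_mul_pow hη hβ hκ m).const_mul _,
    gammaCentralMomentPoly_eval]
  refine sum_congr rfl fun m _ => ?_
  rw [integral_const_mul, integral_ker_mul_pow hη hβ hκ, inv_pow]
  ring

theorem Rop_sub_pow_eq {α β η x : ℝ} (hα : -1 < α) (hβ : 0 < β) (hη : 0 < η) (hx : 0 ≤ x)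
    {n : ℕ} (hn : n ≤ 4) :
    Rop η β α (fun t => (t - x) ^ n) x = ∑ j ∈ range 5,
      (fwdDiff 1)^[j] (gammaCentralMomentPoly (η * β)⁻¹ β x n).eval 0 * lag j α (-(η * x)) := by
  have h := hasSum_half_pow_mul_lag_mul_eval hα (by positivity : 0 ≤ η * x / 2)
    ((natDegree_gammaCentralMomentPoly_le (η * β)⁻¹ β x n).trans_lt (Nat.lt_succ_of_le hn))
  have hterm (κ : ℕ) : (2 : ℝ) ^ (-(κ : ℝ)) * lag κ α (-(η * x) / 2) *
      (if κ = 0 then (0 - x) ^ n else ∫ z in Ioi 0, ker η β κ z * (z - x) ^ n) =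
      (1 / 2) ^ κ * lag κ α (-(η * x / 2)) *
        (gammaCentralMomentPoly (η * β)⁻¹ β x n).eval (κ : ℝ) := by
    rw [Real.rpow_neg zero_le_two, Real.rpow_natCast, one_div, inv_pow, neg_div]
    split_ifs with hκ
    · rw [hκ, Nat.cast_zero, gammaCentralMomentPoly_eval_zero, zero_sub]
    · rw [integral_ker_mul_sub_pow hη hβ hκ]
  rw [Rop, tsum_congr hterm, h.tsum_eq, mul_div_cancel₀ _ two_ne_zero, ← mul_assoc, ← mul_assoc,
    mul_assoc (exp _), ← Real.rpow_add two_pos, neg_div, Real.exp_neg]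
  field_simp
  norm_num

theorem sq_mul_Rop_sub_pow_four {α β η x : ℝ} (hα : -1 < α) (hβ : 0 < β) (hη : 0 < η)
    (hx : 0 ≤ x) :
    η ^ 2 * Rop η β α (fun t => (t - x) ^ 4) x = 3 * x ^ 2 * (3 * β + 1) ^ 2 / β ^ 2
      + (x * (6 / β ^ 3 + 47 / β ^ 2 + 150 / β + 181 + α * (14 / β ^ 2 + 78 / β + 124)
          + α ^ 2 * (6 / β + 18))
        + (6 / β ^ 3 + 33 / β ^ 2 + 78 / β + 75 + α * (6 / β ^ 3 + 44 / β ^ 2 + 126 / β + 138)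
          + α ^ 2 * (11 / β ^ 2 + 54 / β + 78) + α ^ 3 * (6 / β + 16) + α ^ 4) * η⁻¹) * η⁻¹ := by
  rw [Rop_sub_pow_eq hα hβ hη hx le_rfl]
  simp only [fwdDiff_iter_eq_sum_shift, sum_range_succ, sum_range_zero, lag,
    gammaCentralMomentPoly_eval]
  norm_num [Nat.choose, Nat.factorial, prod_range_succ, ascPochhammer_succ_eval]
  field_simp
  ring

theorem tendsto_add_add_mul_inv_mul_inv_atTop (a b c : ℝ) :
    Tendsto (fun η : ℝ => a + (b + c * η⁻¹) * η⁻¹) atTop (nhds a) := by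
  have h := tendsto_inv_atTop_zero (𝕜 := ℝ)
  simpa using tendsto_const_nhds.add ((tendsto_const_nhds.add (h.const_mul c)).mul h)

/-- Asymptotics of the fourth central moment `μ_{η,4}(x)`. -/
theorem stmt17 (α β : ℝ) (hα : -1 < α) (hβ : 0 < β) (x : ℝ) (hx : 0 ≤ x) :
    Filter.Tendsto (fun η : ℝ => η ^ 2 * Rop η β α (fun t => (t - x) ^ 4) x)
      Filter.atTop (nhds (3 * x ^ 2 * (3 * β + 1) ^ 2 / β ^ 2)) := by
  exact (tendsto_add_add_mul_inv_mul_inv_atTop _ _ _).congr' <|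
    (eventually_gt_atTop 0).mono fun η hη => (sq_mul_Rop_sub_pow_four hα hβ hη hx).symm
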